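/- Under the hypotheses of the adaptive Lyapunov identity — B ∈ ℝ^{n×m}, μ > 0, P : ℝ → ℝ^{n×n} differentiable with P(t) symmetric, A_cl(t)ᵀ P(t) + P(t) A_cl(t) = −Q̄(t), e'(t) = A_cl(t) e(t) + B K̃(t) x(t), K̃'(t) = −μ Bᵀ P(t) e(t) x(t)ᵀ — assume additionally that there exist q > 0 and p_min > 0 such that for all t ≥ 0: Q̄(t) ⪰ q Iₙ, ‖P'(t)‖ ≤ q/2 (operator norm), and P(t) ⪰ p_min Iₙ. Then V(t) := e(t)ᵀ P(t) e(t) + μ⁻¹‖K̃(t)‖_F² satisfies V'(t) ≤ −(q/2)|e(t)|² ≤ 0 for all t ≥ 0, and consequently p_min |e(t)|² + μ⁻¹‖K̃(t)‖_F² ≤ e(0)ᵀ P(0) e(0) + μ⁻¹‖K̃(0)‖_F² for all t ≥ 0 (uniform boundedness of the adaptive tracking errors, Lemma 4). -/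

import Mathlib

/-!
Differentiating `V` along the error dynamics, the Lyapunov equation turns the `A_cl`-part of
`2 eᵀ P e'` into `-eᵀ Q̄ e`, while the cross term `2 eᵀ P B K̃ x` produced by the gain error is
cancelled exactly by the derivative of `μ⁻¹ ‖K̃‖_F²` under the adaptation law. Hence
`V' = eᵀ Ṗ e - eᵀ Q̄ e ≤ (q/2 - q) |e|²`, so `V` is antitone on `[0, ∞)`, and `P ⪰ p_min I` bounds
`V(t)` from below by `p_min |e(t)|² + μ⁻¹ ‖K̃(t)‖_F²`.
-/

open Matrix

attribute [local instance] Matrix.normedAddCommGroup Matrix.normedSpace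

/-- Euclidean norm of a vector in `ℝⁿ`. -/
noncomputable def vecNorm {n : ℕ} (v : Fin n → ℝ) : ℝ := Real.sqrt (v ⬝ᵥ v)

/-- Squared Frobenius norm of a real matrix. -/
noncomputable def frobSq {p q : ℕ} (M : Matrix (Fin p) (Fin q) ℝ) : ℝ :=
  ∑ i, ∑ j, (M i j) ^ 2

/-- Operator (induced 2-)norm of a real matrix. -/
noncomputable def opNorm {p q : ℕ} (M : Matrix (Fin p) (Fin q) ℝ) : ℝ :=
  ‖LinearMap.toContinuousLinearMap (Matrix.toEuclideanLin M)‖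

section Calculus

variable {𝕜 : Type*} [NontriviallyNormedField 𝕜] {ι κ : Type*} [Fintype ι] {t : 𝕜}

theorem HasDerivAt.dotProduct {u v : 𝕜 → ι → 𝕜} {u' v' : ι → 𝕜}
    (hu : HasDerivAt u u' t) (hv : HasDerivAt v v' t) :
    HasDerivAt (fun s => u s ⬝ᵥ v s) (u' ⬝ᵥ v t + u t ⬝ᵥ v') t := by
  unfold _root_.dotProduct
  rw [← Finset.sum_add_distrib]
  exact HasDerivAt.fun_sum fun i _ => (hasDerivAt_pi.mp hu i).fun_mul (hasDerivAt_pi.mp hv i)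

theorem HasDerivAt.mulVec {A : 𝕜 → Matrix κ ι 𝕜} {A' : Matrix κ ι 𝕜} {v : 𝕜 → ι → 𝕜}
    {v' : ι → 𝕜} (hA : HasDerivAt A A' t) (hv : HasDerivAt v v' t) :
    HasDerivAt (fun s => A s *ᵥ v s) (A' *ᵥ v t + A t *ᵥ v') t :=
  hasDerivAt_pi.mpr fun k => (hasDerivAt_pi.mp hA k).dotProduct hv

end Calculus

theorem hasDerivAt_frobSq {p q : ℕ} {K : ℝ → Matrix (Fin p) (Fin q) ℝ}
    {K' : Matrix (Fin p) (Fin q) ℝ} {t : ℝ} (hK : HasDerivAt K K' t) :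
    HasDerivAt (fun s => frobSq (K s)) (2 * ∑ i, K t i ⬝ᵥ K' i) t := by
  have hrow (i : Fin p) := hasDerivAt_pi.mp hK i
  have hfun : (fun s => frobSq (K s)) = fun s => ∑ i, K s i ⬝ᵥ K s i := by
    funext s
    exact Finset.sum_congr rfl fun i _ => Finset.sum_congr rfl fun j _ => sq _
  rw [hfun, two_mul, ← Finset.sum_add_distrib]
  exact HasDerivAt.fun_sum fun i _ =>
    ((hrow i).dotProduct (hrow i)).congr_deriv (by rw [dotProduct_comm])

theorem sum_dotProduct_vecMulVec {ι κ R : Type*} [Fintype ι] [Fintype κ] [CommSemiring R]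
    (K : Matrix ι κ R) (u : ι → R) (x : κ → R) :
    ∑ i, K i ⬝ᵥ vecMulVec u x i = u ⬝ᵥ K *ᵥ x := by
  simp [dotProduct, mulVec, vecMulVec_apply, Finset.mul_sum, mul_left_comm]

section Quadratic

variable {ι : Type*} [Fintype ι]

theorem Matrix.IsSymm.dotProduct_mulVec_comm {R : Type*} [CommSemiring R] {P : Matrix ι ι R}
    (hP : P.IsSymm) (v w : ι → R) : v ⬝ᵥ P *ᵥ w = w ⬝ᵥ P *ᵥ v := by
  rw [← dotProduct_transpose_mulVec, hP.eq]

theorem two_mul_dotProduct_mulVec_mulVec_of_lyapunov {R : Type*} [CommRing R]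
    {A P Q : Matrix ι ι R} (hP : P.IsSymm) (hLyap : Aᵀ * P + P * A = -Q) (v : ι → R) :
    2 * (v ⬝ᵥ P *ᵥ A *ᵥ v) = -(v ⬝ᵥ Q *ᵥ v) := by
  have : v ⬝ᵥ (Aᵀ * P) *ᵥ v = v ⬝ᵥ P *ᵥ A *ᵥ v := by
    rw [← mulVec_mulVec, dotProduct_transpose_mulVec, hP.dotProduct_mulVec_comm, dotProduct_comm]
  calc 2 * (v ⬝ᵥ P *ᵥ A *ᵥ v) = v ⬝ᵥ (Aᵀ * P + P * A) *ᵥ v := by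
        rw [add_mulVec, dotProduct_add, this, ← mulVec_mulVec]; ring
    _ = -(v ⬝ᵥ Q *ᵥ v) := by rw [hLyap, neg_mulVec, dotProduct_neg]

theorem Matrix.PosSemidef.mul_dotProduct_self_le [DecidableEq ι] {M : Matrix ι ι ℝ} {c : ℝ}
    (h : (M - c • 1).PosSemidef) (v : ι → ℝ) : c * (v ⬝ᵥ v) ≤ v ⬝ᵥ M *ᵥ v := by
  have := h.dotProduct_mulVec_nonneg v
  simp only [star_trivial, sub_mulVec, smul_mulVec, one_mulVec, dotProduct_sub,
    dotProduct_smul, smul_eq_mul] at this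
  linarith

end Quadratic

theorem dotProduct_self_eq_vecNorm_sq {n : ℕ} (v : Fin n → ℝ) : v ⬝ᵥ v = vecNorm v ^ 2 :=
  (Real.sq_sqrt (by simpa using dotProduct_self_star_nonneg v)).symm

theorem dotProduct_mulVec_le_opNorm_mul {n : ℕ} (M : Matrix (Fin n) (Fin n) ℝ) (v : Fin n → ℝ) :
    v ⬝ᵥ M *ᵥ v ≤ opNorm M * (v ⬝ᵥ v) := by
  set T := LinearMap.toContinuousLinearMap (toEuclideanLin M)
  set w := WithLp.toLp 2 v
  have hw : v ⬝ᵥ v = ‖w‖ * ‖w‖ := by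
    rw [← real_inner_self_eq_norm_mul_norm, EuclideanSpace.inner_toLp_toLp, star_trivial]
  calc v ⬝ᵥ M *ᵥ v = inner ℝ w (T w) := by
        simp [T, w, EuclideanSpace.inner_toLp_toLp, dotProduct_comm]
    _ ≤ ‖w‖ * ‖T w‖ := real_inner_le_norm _ _
    _ ≤ ‖w‖ * (‖T‖ * ‖w‖) := by gcongr; exact T.le_opNorm w
    _ = opNorm M * (v ⬝ᵥ v) := by
        rw [opNorm, hw]; ring

theorem hasDerivAt_adaptiveLyapunov {n m : ℕ} {B : Matrix (Fin n) (Fin m) ℝ} {μ : ℝ} (hμ : μ ≠ 0)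
    {P : ℝ → Matrix (Fin n) (Fin n) ℝ} {P' A Q : Matrix (Fin n) (Fin n) ℝ} {x : Fin n → ℝ}
    {e : ℝ → Fin n → ℝ} {K : ℝ → Matrix (Fin m) (Fin n) ℝ} {t : ℝ}
    (hP : HasDerivAt P P' t) (hPsymm : (P t).IsSymm) (hLyap : Aᵀ * P t + P t * A = -Q)
    (he : HasDerivAt e (A *ᵥ e t + (B * K t) *ᵥ x) t)
    (hK : HasDerivAt K (-μ • vecMulVec ((Bᵀ * P t) *ᵥ e t) x) t) :
    HasDerivAt (fun s => e s ⬝ᵥ P s *ᵥ e s + μ⁻¹ * frobSq (K s))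
      (e t ⬝ᵥ P' *ᵥ e t - e t ⬝ᵥ Q *ᵥ e t) t := by
  refine ((he.dotProduct (hP.mulVec he)).add ((hasDerivAt_frobSq hK).const_mul μ⁻¹)).congr_deriv ?_
  set u := (Bᵀ * P t) *ᵥ e t
  have hcross : e t ⬝ᵥ P t *ᵥ (B * K t) *ᵥ x = u ⬝ᵥ K t *ᵥ x := by
    rw [← mulVec_mulVec, mulVec_mulVec, ← dotProduct_transpose_mulVec, transpose_mul,
      hPsymm.eq, dotProduct_comm]
  have hfrob : μ⁻¹ * (2 * ∑ i, K t i ⬝ᵥ (-μ • vecMulVec u x) i) = -(2 * (u ⬝ᵥ K t *ᵥ x)) := by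
    have hrow (i : Fin m) : K t i ⬝ᵥ (-μ • vecMulVec u x) i = -μ * (K t i ⬝ᵥ vecMulVec u x i) :=
      dotProduct_smul (-μ) _ _
    rw [Finset.sum_congr rfl fun i _ => hrow i, ← Finset.mul_sum, sum_dotProduct_vecMulVec]
    field_simp
  rw [hfrob, hPsymm.dotProduct_mulVec_comm _ (e t)]
  simp only [mulVec_add, dotProduct_add, hcross]
  linarith [two_mul_dotProduct_mulVec_mulVec_of_lyapunov hPsymm hLyap (e t)]

theorem adaptive_tracking_boundedness_general {n m : ℕ}
    (B : Matrix (Fin n) (Fin m) ℝ) (μ : ℝ) (hμ : 0 < μ)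
    (P Pdot Acl Qbar : ℝ → Matrix (Fin n) (Fin n) ℝ)
    (hPderiv : ∀ t, HasDerivAt P (Pdot t) t)
    (hPsymm : ∀ t, (P t).IsSymm)
    (hLyap : ∀ t, (Acl t)ᵀ * P t + P t * Acl t = -(Qbar t))
    (x e : ℝ → Fin n → ℝ) (Ktil : ℝ → Matrix (Fin m) (Fin n) ℝ)
    (he : ∀ t, HasDerivAt e (Acl t *ᵥ e t + (B * Ktil t) *ᵥ x t) t)
    (hKtil : ∀ t, HasDerivAt Ktil
      (-μ • Matrix.vecMulVec ((Bᵀ * P t) *ᵥ e t) (x t)) t)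
    (q pmin : ℝ) (hq : 0 < q)
    (hQlow : ∀ t, 0 ≤ t → (Qbar t - q • (1 : Matrix (Fin n) (Fin n) ℝ)).PosSemidef)
    (hPdotSmall : ∀ t, 0 ≤ t → opNorm (Pdot t) ≤ q / 2)
    (hPlow : ∀ t, 0 ≤ t → (P t - pmin • (1 : Matrix (Fin n) (Fin n) ℝ)).PosSemidef)
    (V : ℝ → ℝ)
    (hV : ∀ t, V t = e t ⬝ᵥ (P t) *ᵥ e t + μ⁻¹ * frobSq (Ktil t)) :
    (∀ t, 0 ≤ t →
      deriv V t ≤ -(q / 2) * (vecNorm (e t)) ^ 2 ∧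
      -(q / 2) * (vecNorm (e t)) ^ 2 ≤ 0) ∧
    (∀ t, 0 ≤ t →
      pmin * (vecNorm (e t)) ^ 2 + μ⁻¹ * frobSq (Ktil t) ≤
        e 0 ⬝ᵥ (P 0) *ᵥ e 0 + μ⁻¹ * frobSq (Ktil 0)) := by
  have hVderiv (t : ℝ) : HasDerivAt V (e t ⬝ᵥ Pdot t *ᵥ e t - e t ⬝ᵥ Qbar t *ᵥ e t) t :=
    funext hV ▸ hasDerivAt_adaptiveLyapunov hμ.ne' (hPderiv t) (hPsymm t) (hLyap t) (he t)
      (hKtil t)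
  have hdecay (t : ℝ) (ht : 0 ≤ t) :
      e t ⬝ᵥ Pdot t *ᵥ e t - e t ⬝ᵥ Qbar t *ᵥ e t ≤ -(q / 2) * vecNorm (e t) ^ 2 := by
    have hQ := (hQlow t ht).mul_dotProduct_self_le (e t)
    have hPdot := dotProduct_mulVec_le_opNorm_mul (Pdot t) (e t)
    rw [dotProduct_self_eq_vecNorm_sq] at hQ hPdot
    have := hPdot.trans (mul_le_mul_of_nonneg_right (hPdotSmall t ht) (sq_nonneg _))
    linarith
  have hnonpos (t : ℝ) : -(q / 2) * vecNorm (e t) ^ 2 ≤ 0 :=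
    mul_nonpos_of_nonpos_of_nonneg (by linarith) (sq_nonneg _)
  refine ⟨fun t ht => ⟨(hVderiv t).deriv ▸ hdecay t ht, hnonpos t⟩, fun t ht => ?_⟩
  have hanti : AntitoneOn V (Set.Ici 0) :=
    antitoneOn_of_hasDerivWithinAt_nonpos (convex_Ici 0)
      (fun s _ => (hVderiv s).continuousAt.continuousWithinAt)
      (fun s _ => (hVderiv s).hasDerivWithinAt)
      fun s hs => (hdecay s (interior_subset hs)).trans (hnonpos s)
  calc pmin * vecNorm (e t) ^ 2 + μ⁻¹ * frobSq (Ktil t) ≤ V t := by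
        rw [hV, ← dotProduct_self_eq_vecNorm_sq]
        exact add_le_add_left ((hPlow t ht).mul_dotProduct_self_le (e t)) _
    _ ≤ V 0 := hanti Set.self_mem_Ici ht ht
    _ = _ := hV 0

/-- Lemma 4: under the adaptive Lyapunov identity hypotheses, if
`Q̄(t) ⪰ qIₙ`, `‖P'(t)‖ ≤ q/2` and `P(t) ⪰ p_min Iₙ` for `t ≥ 0`, then
`V = eᵀPe + μ⁻¹‖K̃‖_F²` satisfies `V' ≤ −(q/2)|e|² ≤ 0` on `t ≥ 0`, and hence
`p_min|e(t)|² + μ⁻¹‖K̃(t)‖_F² ≤ e(0)ᵀP(0)e(0) + μ⁻¹‖K̃(0)‖_F²` for all `t ≥ 0`. -/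
theorem adaptive_tracking_boundedness {n m : ℕ}
    (B : Matrix (Fin n) (Fin m) ℝ) (μ : ℝ) (hμ : 0 < μ)
    (P Pdot Acl Qbar : ℝ → Matrix (Fin n) (Fin n) ℝ)
    (hPderiv : ∀ t, HasDerivAt P (Pdot t) t)
    (hPsymm : ∀ t, (P t).IsSymm)
    (hLyap : ∀ t, (Acl t)ᵀ * P t + P t * Acl t = -(Qbar t))
    (x e : ℝ → Fin n → ℝ) (Ktil : ℝ → Matrix (Fin m) (Fin n) ℝ)
    (he : ∀ t, HasDerivAt e (Acl t *ᵥ e t + (B * Ktil t) *ᵥ x t) t)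
    (hKtil : ∀ t, HasDerivAt Ktil
      (-μ • Matrix.vecMulVec ((Bᵀ * P t) *ᵥ e t) (x t)) t)
    (q pmin : ℝ) (hq : 0 < q) (hpmin : 0 < pmin)
    (hQlow : ∀ t, 0 ≤ t → (Qbar t - q • (1 : Matrix (Fin n) (Fin n) ℝ)).PosSemidef)
    (hPdotSmall : ∀ t, 0 ≤ t → opNorm (Pdot t) ≤ q / 2)
    (hPlow : ∀ t, 0 ≤ t → (P t - pmin • (1 : Matrix (Fin n) (Fin n) ℝ)).PosSemidef)
    (V : ℝ → ℝ)
    (hV : ∀ t, V t = e t ⬝ᵥ (P t) *ᵥ e t + μ⁻¹ * frobSq (Ktil t)) :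
    (∀ t, 0 ≤ t →
      deriv V t ≤ -(q / 2) * (vecNorm (e t)) ^ 2 ∧
      -(q / 2) * (vecNorm (e t)) ^ 2 ≤ 0) ∧
    (∀ t, 0 ≤ t →
      pmin * (vecNorm (e t)) ^ 2 + μ⁻¹ * frobSq (Ktil t) ≤
        e 0 ⬝ᵥ (P 0) *ᵥ e 0 + μ⁻¹ * frobSq (Ktil 0)) :=
  adaptive_tracking_boundedness_general B μ hμ P Pdot Acl Qbar hPderiv hPsymm hLyap x e Ktil he
    hKtil q pmin hq hQlow hPdotSmall hPlow V hV
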